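/- If A is an insertion-only streaming algorithm value function with approximation factor c = 1/2 − ε' and the suffix-monotonicity property, and A(S₁) ≥ α·A(S₁ ‖ S₂) for some 0 < α < 1, then A(S₁ ‖ S₃) ≥ (1/4 − ε'/2)·α·OPT ≥ (1/4 − ε')·α·OPT, where OPT is the optimal cardinality-k solution value over stream S₁ ‖ S₂ ‖ S₃. -/
import Mathlib


open Finset

/-- Optimal value of cardinality-constrained maximization of `f` over subsets of `E`. -/
noncomputable def OPT {V : Type*} [DecidableEq V] (f : Finset V → ℝ) (k : ℕ)
    (E : Finset V) : ℝ :=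
  (E.powerset.filter (fun T => T.card ≤ k)).sup' ⟨∅, by simp⟩ f

lemma le_OPT {V : Type*} [DecidableEq V] {f : Finset V → ℝ} {k : ℕ}
    {E T : Finset V} (hT : T ⊆ E) (hc : T.card ≤ k) : f T ≤ OPT f k E :=
  Finset.le_sup' f (by simp [Finset.mem_filter, Finset.mem_powerset, hT, hc])

lemma OPT_nonneg {V : Type*} [DecidableEq V] {f : Finset V → ℝ} {k : ℕ}
    (hnorm : f ∅ = 0) (E : Finset V) : 0 ≤ OPT f k E := by
  have := le_OPT (f := f) (k := k) (E := E) (T := ∅) (Finset.empty_subset E) (by simp)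
  linarith [this]

/-- Specialization to SieveStreaming's factor (Lemma 2 of the paper). -/
theorem substreams_sieve {V : Type*} [DecidableEq V]
    (f : Finset V → ℝ) (k : ℕ) (hk : 1 ≤ k)
    (hmono : ∀ S T : Finset V, S ⊆ T → f S ≤ f T)
    (hsub : ∀ A B : Finset V, f (A ∪ B) + f (A ∩ B) ≤ f A + f B)
    (hnorm : f ∅ = 0)
    (A : List V → ℝ) (ε' : ℝ) (hε'0 : 0 < ε') (hε'1 : ε' < 1 / 2)
    (happrox : ∀ S : List V, (1 / 2 - ε') * OPT f k S.toFinset ≤ A S)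
    (hsuffix : ∀ S S' : List V, A S ≤ A (S ++ S'))
    (α : ℝ) (hα0 : 0 < α) (hα1 : α < 1)
    (S₁ S₂ : List V)
    (h : α * A (S₁ ++ S₂) ≤ A S₁) :
    ∀ S₃ : List V,
      (1 / 4 - ε' / 2) * α * OPT f k (S₁ ++ S₂ ++ S₃).toFinset ≤ A (S₁ ++ S₃) ∧
      (1 / 4 - ε') * α * OPT f k (S₁ ++ S₂ ++ S₃).toFinset ≤
        (1 / 4 - ε' / 2) * α * OPT f k (S₁ ++ S₂ ++ S₃).toFinset := by
  intro S₃
  set E₁₂ := (S₁ ++ S₂).toFinset with hE12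
  set E₁₃ := (S₁ ++ S₃).toFinset with hE13
  set E := (S₁ ++ S₂ ++ S₃).toFinset with hE
  -- OPT is attained
  obtain ⟨T, hTmem, hTval⟩ :=
    Finset.exists_mem_eq_sup' (⟨∅, by simp⟩ : (E.powerset.filter (fun T => T.card ≤ k)).Nonempty) f
  rw [Finset.mem_filter, Finset.mem_powerset] at hTmem
  obtain ⟨hTE, hTc⟩ := hTmem
  have hOPTE : OPT f k E = f T := hTval
  -- split T
  have hsplit : f T ≤ f (T ∩ E₁₂) + f (T \ E₁₂) := by
    have h1 := hsub (T ∩ E₁₂) (T \ E₁₂)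
    have hu : (T ∩ E₁₂) ∪ (T \ E₁₂) = T := by
      ext x; simp [Finset.mem_inter, Finset.mem_sdiff, Finset.mem_union]; tauto
    have hi : (T ∩ E₁₂) ∩ (T \ E₁₂) = ∅ := by
      ext x; simp
    rw [hu, hi, hnorm] at h1
    linarith
  have hX : f (T ∩ E₁₂) ≤ OPT f k E₁₂ :=
    le_OPT (Finset.inter_subset_right) (le_trans (Finset.card_le_card Finset.inter_subset_left) hTc)
  have hY : f (T \ E₁₂) ≤ OPT f k E₁₃ := by
    apply le_OPT _ (le_trans (Finset.card_le_card (Finset.sdiff_subset)) hTc)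
    intro x hx
    rw [Finset.mem_sdiff] at hx
    obtain ⟨hxT, hxE12⟩ := hx
    have := hTE hxT
    simp only [hE, hE12, hE13, List.toFinset_append, Finset.mem_union] at *
    tauto
  -- A bounds
  have hA12 : (1 / 2 - ε') * OPT f k E₁₂ ≤ A (S₁ ++ S₂) := happrox _
  have hA13 : (1 / 2 - ε') * OPT f k E₁₃ ≤ A (S₁ ++ S₃) := happrox _
  have h1 : A S₁ ≤ A (S₁ ++ S₃) := hsuffix _ _
  have hO12 : 0 ≤ OPT f k E₁₂ := OPT_nonneg hnorm _
  have hO13 : 0 ≤ OPT f k E₁₃ := OPT_nonneg hnorm _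
  have hOE : 0 ≤ OPT f k E := OPT_nonneg hnorm _
  have key : OPT f k E ≤ OPT f k E₁₂ + OPT f k E₁₃ := by
    rw [hOPTE]; linarith
  constructor
  · nlinarith [mul_le_mul_of_nonneg_left hA12 hα0.le,
      mul_le_mul_of_nonneg_left hO13 (by nlinarith : (0:ℝ) ≤ (1/2 - ε') * (1 - α)),
      mul_le_mul_of_nonneg_left key (by nlinarith : (0:ℝ) ≤ α * (1/2 - ε'))]
  · apply mul_le_mul_of_nonneg_right _ hOE
    nlinarith
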